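/- Let K be a compact line, L a second-countable (equivalently metrizable) zero-dimensional compact line, and q : K → L a continuous increasing surjection. If a bounded sequence (ν_n) in M(K) satisfies ν_n([0,t]) → 0 for every right-isolated point t of K, and K is zero-dimensional, then (ν_n) is weak*-null in M(K) = C(K)*. -/

import Mathlib

open MeasureTheory Set Filter Topology

/-- Integral of a continuous function against a signed measure. -/
noncomputable def sint {K : Type*} [TopologicalSpace K] [MeasurableSpace K]
    (μ : SignedMeasure K) (f : C(K, ℝ)) : ℝ :=
  ∫ x, f x ∂μ.toJordanDecomposition.posPart - ∫ x, f x ∂μ.toJordanDecomposition.negPart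

/-- A point of a linear order is right-isolated if it is the maximum or has a successor. -/
def RightIsolated {K : Type*} [LinearOrder K] (b : K) : Prop :=
  IsMax b ∨ ∃ u, b ⋖ u

/-!
The functionals `f ↦ sint (ν n) f` are continuous linear with uniformly bounded norms, so the
set of `f` along which they tend to `0` is a closed subspace of `C(K, ℝ)`. It contains the
indicators of the clopen intervals `Iic t`, `t` right-isolated. These contain `1` and are closed
under products, so their span is a subalgebra; zero-dimensionality of `K` puts a right-isolated
point between any two points, so it separates points and is dense by Stone–Weierstrass.
-/

theorem tendsto_zero_of_norm_le_of_dense_span {𝕜 E F ι : Type*} [NontriviallyNormedField 𝕜]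
    [NormedAddCommGroup E] [NormedSpace 𝕜 E] [NormedAddCommGroup F] [NormedSpace 𝕜 F]
    {l : Filter ι} {φ : ι → E →L[𝕜] F} (hφ : ∃ C, ∀ i, ‖φ i‖ ≤ C) {s : Set E}
    (hs : Dense (Submodule.span 𝕜 s : Set E)) (h : ∀ x ∈ s, Tendsto (φ · x) l (𝓝 0)) (x : E) :
    Tendsto (φ · x) l (𝓝 0) := by
  let S : Submodule 𝕜 E :=
    { carrier := {x | Tendsto (φ · x) l (𝓝 0)}
      add_mem' := fun {x y} hx hy => by simpa using hx.add hy
      zero_mem' := by simp [tendsto_const_nhds]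
      smul_mem' := fun c x hx => by simpa using hx.const_smul c }
  have hS : IsClosed (S : Set E) :=
    Equicontinuous.isClosed_setOfPred_tendsto (((NormedSpace.equicontinuous_TFAE φ).out 5 1).mp hφ)
      continuous_const
  have hspan : Submodule.span 𝕜 s ≤ S := Submodule.span_le.mpr h
  exact hS.closure_subset_iff.mpr hspan (hs x)

section SignedMeasure

variable {K : Type*} [TopologicalSpace K] [MeasurableSpace K]

lemma sint_smul (μ : SignedMeasure K) (c : ℝ) (f : C(K, ℝ)) :
    sint μ (c • f) = c * sint μ f := by
  simp only [sint, ContinuousMap.smul_apply, smul_eq_mul, integral_const_mul, mul_sub]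

lemma sint_eq_of_coe_eq_indicator (μ : SignedMeasure K) {U : Set K} (hU : MeasurableSet U)
    {f : C(K, ℝ)} (hf : ⇑f = U.indicator 1) : sint μ f = μ U := by
  rw [sint, hf, integral_indicator_one hU, integral_indicator_one hU,
    μ.apply_eq_posPart_real_sub_negPart_real hU]

variable [CompactSpace K]

lemma abs_sint_le (μ : SignedMeasure K) (f : C(K, ℝ)) :
    |sint μ f| ≤ (μ.totalVariation univ).toReal * ‖f‖ := by
  set P := μ.toJordanDecomposition.posPart
  set N := μ.toJordanDecomposition.negPart
  have hbound (ρ : Measure K) [IsFiniteMeasure ρ] : ‖∫ x, f x ∂ρ‖ ≤ ‖f‖ * (ρ univ).toReal :=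
    norm_integral_le_of_norm_le_const (Eventually.of_forall f.norm_coe_le_norm)
  have htv : (μ.totalVariation univ).toReal = (P univ).toReal + (N univ).toReal := by
    rw [SignedMeasure.totalVariation, Measure.add_apply,
      ENNReal.toReal_add (measure_ne_top _ _) (measure_ne_top _ _)]
  calc |sint μ f| ≤ ‖∫ x, f x ∂P‖ + ‖∫ x, f x ∂N‖ := abs_sub _ _
    _ ≤ ‖f‖ * (P univ).toReal + ‖f‖ * (N univ).toReal := add_le_add (hbound P) (hbound N)
    _ = (μ.totalVariation univ).toReal * ‖f‖ := by rw [htv]; ring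

variable [OpensMeasurableSpace K]

lemma sint_add (μ : SignedMeasure K) (f g : C(K, ℝ)) :
    sint μ (f + g) = sint μ f + sint μ g := by
  have hint (h : C(K, ℝ)) (ρ : Measure K) [IsFiniteMeasure ρ] : Integrable h ρ :=
    h.continuous.integrable_of_hasCompactSupport (.of_compactSpace _)
  simp only [sint, ContinuousMap.add_apply]
  rw [integral_add (hint f _) (hint g _), integral_add (hint f _) (hint g _)]
  ring

noncomputable def sintCLM (μ : SignedMeasure K) : C(K, ℝ) →L[ℝ] ℝ :=
  LinearMap.mkContinuous
    { toFun := sint μ, map_add' := sint_add μ, map_smul' := sint_smul μ }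
    (μ.totalVariation univ).toReal (abs_sint_le μ)

lemma sintCLM_apply (μ : SignedMeasure K) (f : C(K, ℝ)) : sintCLM μ f = sint μ f := rfl

lemma norm_sintCLM_le (μ : SignedMeasure K) : ‖sintCLM μ‖ ≤ (μ.totalVariation univ).toReal :=
  LinearMap.mkContinuous_norm_le _ ENNReal.toReal_nonneg _

end SignedMeasure

section CompactLine

variable {K : Type*} [LinearOrder K]

lemma RightIsolated.min {s t : K} (hs : RightIsolated s) (ht : RightIsolated t) :
    RightIsolated (min s t) :=
  min_rec' _ hs ht

variable [TopologicalSpace K]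

variable (K) in
def iicIndicators : Set C(K, ℝ) :=
  {f | ∃ t, RightIsolated t ∧ ⇑f = (Iic t).indicator 1}

lemma mul_mem_iicIndicators {f g : C(K, ℝ)} (hf : f ∈ iicIndicators K)
    (hg : g ∈ iicIndicators K) : f * g ∈ iicIndicators K := by
  obtain ⟨s, hs, hfs⟩ := hf
  obtain ⟨t, ht, hgt⟩ := hg
  refine ⟨min s t, hs.min ht, ?_⟩
  rw [ContinuousMap.coe_mul, hfs, hgt, ← inter_indicator_one, Iic_inter_Iic]

variable [OrderTopology K]

lemma RightIsolated.isClopen_Iic {t : K} (ht : RightIsolated t) : IsClopen (Iic t) := by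
  refine ⟨isClosed_Iic, ?_⟩
  rcases ht with hmax | ⟨u, hu⟩
  · rw [hmax.isTop.Iic_eq]; exact isOpen_univ
  · rw [← hu.Iio_eq]; exact isOpen_Iio

lemma charFn_Iic_mem_iicIndicators {t : K} (ht : RightIsolated t) :
    (LocallyConstant.charFn ℝ ht.isClopen_Iic : C(K, ℝ)) ∈ iicIndicators K :=
  ⟨t, ht, rfl⟩

variable [CompactSpace K]

lemma exists_rightIsolated_mem_Ico
    (hKzd : TopologicalSpace.IsTopologicalBasis {U : Set K | IsClopen U})
    {x y : K} (hxy : x < y) : ∃ t, RightIsolated t ∧ t ∈ Ico x y := by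
  -- For a clopen `U ∋ x` inside `Iio y`, the largest point `t` of `U ∩ Ici x`
  -- has as successor the least point of `Uᶜ ∩ Ici t`.
  obtain ⟨U, hUbasis, hxU, hUy⟩ := hKzd.exists_subset_of_mem_open (mem_Iio.2 hxy) isOpen_Iio
  have hU : IsClopen U := hUbasis
  obtain ⟨t, ⟨htU, hxt⟩, htmax⟩ :=
    (hU.isClosed.inter isClosed_Ici).isCompact.exists_isGreatest ⟨x, hxU, le_rfl⟩
  have hty : t < y := hUy htU
  have hnotU : ∀ c, t < c → c ∉ U := fun c htc hcU => (htmax ⟨hcU, hxt.trans htc.le⟩).not_gt htc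
  obtain ⟨m, ⟨hmU, hmt⟩, hmmin⟩ := (hU.compl.isClosed.inter isClosed_Ici).isCompact.exists_isLeast
    ⟨y, hnotU y hty, hty.le⟩
  have htm : t < m := lt_of_le_of_ne hmt fun h => hmU (h ▸ htU)
  exact ⟨t, Or.inr ⟨m, htm, fun c htc hcm => (hmmin ⟨hnotU c htc, htc.le⟩).not_gt hcm⟩, hxt, hty⟩

variable [Nonempty K]

lemma one_mem_iicIndicators : (1 : C(K, ℝ)) ∈ iicIndicators K := by
  obtain ⟨M, -, hM⟩ := isCompact_univ.exists_isGreatest (univ_nonempty (α := K))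
  have hMmax : IsMax M := fun b _ => hM (mem_univ b)
  refine ⟨M, Or.inl hMmax, ?_⟩
  rw [hMmax.isTop.Iic_eq, indicator_univ]
  rfl

lemma adjoin_iicIndicators_eq_span :
    Subalgebra.toSubmodule (Algebra.adjoin ℝ (iicIndicators K)) =
      Submodule.span ℝ (iicIndicators K) := by
  let M : Submonoid C(K, ℝ) :=
    { carrier := iicIndicators K
      mul_mem' := mul_mem_iicIndicators
      one_mem' := one_mem_iicIndicators }
  exact Algebra.adjoin_eq_span_of_subset ℝ
    fun f hf => Submodule.subset_span ((Submonoid.closure_le (S := M)).mpr subset_rfl hf)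

lemma dense_span_iicIndicators
    (hKzd : TopologicalSpace.IsTopologicalBasis {U : Set K | IsClopen U}) :
    Dense (Submodule.span ℝ (iicIndicators K) : Set C(K, ℝ)) := by
  have hsep : (Algebra.adjoin ℝ (iicIndicators K)).SeparatesPoints := by
    intro x y hxy
    wlog h : x < y generalizing x y
    · obtain ⟨_, ⟨f, hf, rfl⟩, hne⟩ := this hxy.symm (hxy.lt_or_gt.resolve_left h)
      exact ⟨f, ⟨f, hf, rfl⟩, hne.symm⟩
    obtain ⟨t, ht, hxt, hty⟩ := exists_rightIsolated_mem_Ico hKzd h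
    refine ⟨_, ⟨_, Algebra.subset_adjoin (charFn_Iic_mem_iicIndicators ht), rfl⟩, ?_⟩
    simp [LocallyConstant.coe_charFn, hxt, hty.not_ge]
  rw [← adjoin_iicIndicators_eq_span, Subalgebra.coe_toSubmodule, dense_iff_closure_eq,
    ← Subalgebra.topologicalClosure_coe,
    ContinuousMap.subalgebra_topologicalClosure_eq_top_of_separatesPoints _ hsep]
  rfl

end CompactLine

theorem stmt10_general {K : Type*}
    [LinearOrder K] [TopologicalSpace K] [OrderTopology K] [CompactSpace K] [Nonempty K]
    [MeasurableSpace K] [BorelSpace K]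
    (hKzd : TopologicalSpace.IsTopologicalBasis {U : Set K | IsClopen U})
    (ν : ℕ → SignedMeasure K)
    (hbdd : ∃ C : ℝ, ∀ n, ((ν n).totalVariation Set.univ).toReal ≤ C)
    (hnull : ∀ t : K, RightIsolated t →
      Tendsto (fun n => ν n (Set.Iic t)) atTop (𝓝 0)) :
    ∀ f : C(K, ℝ), Tendsto (fun n => sint (ν n) f) atTop (𝓝 0) := by
  obtain ⟨C, hC⟩ := hbdd
  refine tendsto_zero_of_norm_le_of_dense_span (φ := fun n => sintCLM (ν n))
    ⟨C, fun n => (norm_sintCLM_le (ν n)).trans (hC n)⟩ (dense_span_iicIndicators hKzd) ?_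
  rintro f ⟨t, ht, hf⟩
  simpa only [sintCLM_apply, sint_eq_of_coe_eq_indicator _ measurableSet_Iic hf] using hnull t ht

theorem stmt10 {K L : Type*}
    [LinearOrder K] [TopologicalSpace K] [OrderTopology K] [CompactSpace K] [Nonempty K]
    [MeasurableSpace K] [BorelSpace K]
    [LinearOrder L] [TopologicalSpace L] [OrderTopology L] [CompactSpace L] [Nonempty L]
    [SecondCountableTopology L]
    (hLzd : TopologicalSpace.IsTopologicalBasis {U : Set L | IsClopen U})
    (q : K → L) (hqc : Continuous q) (hqm : Monotone q) (hqs : Function.Surjective q)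
    (hKzd : TopologicalSpace.IsTopologicalBasis {U : Set K | IsClopen U})
    (ν : ℕ → SignedMeasure K) (hreg : ∀ n, (ν n).totalVariation.Regular)
    (hbdd : ∃ C : ℝ, ∀ n, ((ν n).totalVariation Set.univ).toReal ≤ C)
    (hnull : ∀ t : K, RightIsolated t →
      Tendsto (fun n => ν n (Set.Iic t)) atTop (𝓝 0)) :
    ∀ f : C(K, ℝ), Tendsto (fun n => sint (ν n) f) atTop (𝓝 0) :=
  stmt10_general hKzd ν hbdd hnull
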